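/- Under the conditions of Lemma 3.2 with n = 2 and unit weights: if X₁, X₂ are conditionally independent given G with common subexponential distribution F satisfying Assumption D3, then P(X₁ > x, X₂ > x) = o(F̄(x)) as x → ∞. -/

import Mathlib

open MeasureTheory ProbabilityTheory Filter Topology Set

/-- The (right) tail function of a measure on `ℝ`. -/
noncomputable def tail (μ : MeasureTheory.Measure ℝ) (x : ℝ) : ℝ := (μ (Set.Ioi x)).toReal

/-- A distribution is long-tailed if `F̄(x+y) ~ F̄(x)` for every `y`. -/
def LongTailed (μ : MeasureTheory.Measure ℝ) : Prop :=
  (∀ x : ℝ, 0 < μ (Set.Ioi x)) ∧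
  ∀ y : ℝ, Filter.Tendsto (fun x => tail μ (x + y) / tail μ x) Filter.atTop (nhds 1)

/-- A distribution supported on `[0,∞)` is subexponential if `F̄^{*2}(x) ~ 2 F̄(x)`. -/
def Subexponential (μ : MeasureTheory.Measure ℝ) : Prop :=
  (∀ x : ℝ, 0 < μ (Set.Ioi x)) ∧ μ (Set.Iio 0) = 0 ∧
  Filter.Tendsto (fun x => tail (μ.conv μ) x / tail μ x) Filter.atTop (nhds 2)

/-- Membership in the class `H(F)` of insensitivity functions of a long-tailed `F`. -/
structure MemH (μ : MeasureTheory.Measure ℝ) (h : ℝ → ℝ) : Prop where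
  nonneg : ∀ x, 0 ≤ x → 0 ≤ h x
  mono : MonotoneOn h (Set.Ici 0)
  tendsto_atTop : Filter.Tendsto h Filter.atTop Filter.atTop
  ratio_anti : AntitoneOn (fun x => h x / x) (Set.Ioi 0)
  ratio_zero : Filter.Tendsto (fun x => h x / x) Filter.atTop (nhds 0)
  tail_insensitive :
    Filter.Tendsto (fun x => tail μ (x - h x) / tail μ x) Filter.atTop (nhds 1)

/-- Assumption D3 of Foss–Richards (2010) with insensitivity function `h ∈ H(F)`:
there are a nondecreasing `r` and events `Bᵢ(x) ∈ G` increasing to `Ω` with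
`P(Xᵢ > x | G) 1(Bᵢ(x)) ≤ r(x) F̄(x) 1(Bᵢ(x))` a.s., `P(Bᵢ(h(x))ᶜ) = o(F̄(x))`
uniformly in `i`, `r(x) F̄(h(x)) = o(1)` and
`r(x) ∫_{h(x)}^{x-h(x)} F̄(x-y) F(dy) = o(F̄(x))`. -/
def AssumptionD3 {Ω : Type*} [MeasurableSpace Ω] (P : MeasureTheory.Measure Ω)
    (G : MeasurableSpace Ω) {ι : Type*} (X : ι → Ω → ℝ)
    (μ : MeasureTheory.Measure ℝ) (h : ℝ → ℝ) : Prop :=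
  ∃ (r : ℝ → ℝ) (B : ι → ℝ → Set Ω),
    Monotone r ∧
    (∀ i x, MeasurableSet[G] (B i x)) ∧
    (∀ i, Monotone (B i)) ∧
    (∀ i, (⋃ x : ℝ, B i x) = Set.univ) ∧
    (∀ i x, ∀ᵐ ω ∂P, ω ∈ B i x →
      (P[Set.indicator {ω' | x < X i ω'} (fun _ => (1 : ℝ)) | G]) ω ≤ r x * tail μ x) ∧
    (∀ ε : ℝ, 0 < ε → ∀ᶠ x in Filter.atTop, ∀ i,
      (P ((B i (h x))ᶜ)).toReal ≤ ε * tail μ x) ∧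
    Filter.Tendsto (fun x => r x * tail μ (h x)) Filter.atTop (nhds 0) ∧
    Filter.Tendsto (fun x =>
        (r x * ∫ y in Set.Ioc (h x) (x - h x), tail μ (x - y) ∂μ) / tail μ x)
      Filter.atTop (nhds 0)

/-!
On the event `B₀(x) ∈ G` the conditional tail `P(X₀ > x | G)` is at most `r(x) F̄(x)`, and by
conditional independence `P(X₀ > x, X₁ > x) = E[P(X₀ > x | G) P(X₁ > x | G)]`. Hence
`P(X₀ > x, X₁ > x) ≤ r(x) F̄(x) · F̄(x) + P(B₀(x)ᶜ) ≤ r(x) F̄(h(x)) · F̄(x) + P(B₀(h(x))ᶜ)`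
once `h(x) ≤ x`, and both terms are `o(F̄(x))` by Assumption D3.
-/

section CondExpIndicator

variable {Ω : Type*} {m mΩ : MeasurableSpace Ω} {P : Measure Ω} {s : Set Ω}

theorem condExp_indicator_one_nonneg : 0 ≤ᵐ[P] (P⟦s | m⟧) :=
  condExp_nonneg (.of_forall fun _ => indicator_nonneg (fun _ _ => zero_le_one) _)

variable [IsFiniteMeasure P]

theorem condExp_indicator_one_le_one (hm : m ≤ mΩ) (hs : MeasurableSet s) :
    P⟦s | m⟧ ≤ᵐ[P] 1 := by
  have hmono : P⟦s | m⟧ ≤ᵐ[P] P[fun _ => (1 : ℝ) | m] :=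
    condExp_mono ((integrable_const 1).indicator hs) (integrable_const 1)
      (.of_forall fun _ => indicator_le_self' (fun _ _ => zero_le_one) _)
  rwa [condExp_const hm] at hmono

theorem integral_condExp_indicator_one (hm : m ≤ mΩ) (hs : MeasurableSet s) :
    ∫ ω, (P⟦s | m⟧) ω ∂P = P.real s := by
  rw [integral_condExp hm, integral_indicator hs, setIntegral_const, smul_eq_mul, mul_one]

end CondExpIndicator

theorem integral_mul_le_of_ae_le_on {Ω : Type*} [MeasurableSpace Ω] {P : Measure Ω}
    [IsFiniteMeasure P] {f g : Ω → ℝ} {B : Set Ω} {c : ℝ} (hB : MeasurableSet B) (hc : 0 ≤ c)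
    (hf₀ : 0 ≤ᵐ[P] f) (hf₁ : f ≤ᵐ[P] 1) (hg₀ : 0 ≤ᵐ[P] g) (hg₁ : g ≤ᵐ[P] 1)
    (hg : Integrable g P) (hfB : ∀ᵐ ω ∂P, ω ∈ B → f ω ≤ c) :
    ∫ ω, f ω * g ω ∂P ≤ c * ∫ ω, g ω ∂P + P.real Bᶜ := by
  have hind : Integrable (Bᶜ.indicator fun _ => (1 : ℝ)) P :=
    (integrable_const 1).indicator hB.compl
  have hpointwise : ∀ᵐ ω ∂P, f ω * g ω ≤ c * g ω + Bᶜ.indicator (fun _ => (1 : ℝ)) ω := by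
    filter_upwards [hf₀, hf₁, hg₀, hg₁, hfB] with ω hf₀ hf₁ hg₀ hg₁ hfB
    by_cases hω : ω ∈ B
    · rw [indicator_of_notMem (notMem_compl_iff.2 hω), add_zero]
      exact mul_le_mul_of_nonneg_right (hfB hω) hg₀
    · rw [indicator_of_mem (mem_compl hω)]
      have : f ω * g ω ≤ 1 := mul_le_one₀ hf₁ hg₀ hg₁
      linarith [mul_nonneg hc hg₀]
  calc ∫ ω, f ω * g ω ∂P
      ≤ ∫ ω, (c * g ω + Bᶜ.indicator (fun _ => (1 : ℝ)) ω) ∂P :=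
        integral_mono_of_nonneg (by filter_upwards [hf₀, hg₀] with ω using mul_nonneg)
          ((hg.const_mul c).add hind) hpointwise
    _ = c * ∫ ω, g ω ∂P + P.real Bᶜ := by
        rw [integral_add (hg.const_mul c) hind, integral_const_mul,
          integral_indicator hB.compl, setIntegral_const, smul_eq_mul, mul_one]

section CondIndepFun

variable {Ω β γ : Type*} {m mΩ : MeasurableSpace Ω} [StandardBorelSpace Ω] {hm : m ≤ mΩ}
  {P : Measure Ω} [IsFiniteMeasure P] [MeasurableSpace β] [MeasurableSpace γ]
  {X : Ω → β} {Y : Ω → γ} {s : Set β} {t : Set γ}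

theorem ProbabilityTheory.CondIndepFun.measureReal_inter_preimage_eq_integral_mul
    (hXY : CondIndepFun m hm X Y P) (hX : Measurable X) (hY : Measurable Y)
    (hs : MeasurableSet s) (ht : MeasurableSet t) :
    P.real (X ⁻¹' s ∩ Y ⁻¹' t) = ∫ ω, (P⟦X ⁻¹' s | m⟧) ω * (P⟦Y ⁻¹' t | m⟧) ω ∂P := by
  rw [← integral_condExp_indicator_one hm ((hX hs).inter (hY ht))]
  exact integral_congr_ae
    ((condIndepFun_iff_condExp_inter_preimage_eq_mul hX hY).1 hXY s t hs ht)

theorem ProbabilityTheory.CondIndepFun.measureReal_inter_preimage_le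
    (hXY : CondIndepFun m hm X Y P) (hX : Measurable X) (hY : Measurable Y)
    (hs : MeasurableSet s) (ht : MeasurableSet t) {B : Set Ω} (hB : MeasurableSet[m] B)
    {c : ℝ} (hc : 0 ≤ c) (hXB : ∀ᵐ ω ∂P, ω ∈ B → (P⟦X ⁻¹' s | m⟧) ω ≤ c) :
    P.real (X ⁻¹' s ∩ Y ⁻¹' t) ≤ c * P.real (Y ⁻¹' t) + P.real Bᶜ := by
  rw [hXY.measureReal_inter_preimage_eq_integral_mul hX hY hs ht,
    ← integral_condExp_indicator_one hm (hY ht)]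
  exact integral_mul_le_of_ae_le_on (hm _ hB) hc condExp_indicator_one_nonneg
    (condExp_indicator_one_le_one hm (hX hs)) condExp_indicator_one_nonneg
    (condExp_indicator_one_le_one hm (hY ht)) integrable_condExp hXB

end CondIndepFun

theorem tail_nonneg (μ : Measure ℝ) (x : ℝ) : 0 ≤ tail μ x := ENNReal.toReal_nonneg

theorem tail_antitone (μ : Measure ℝ) [IsFiniteMeasure μ] : Antitone (tail μ) :=
  fun _ _ hxy => ENNReal.toReal_mono (measure_ne_top μ _) (measure_mono (Ioi_subset_Ioi hxy))

theorem tail_eq_measureReal_preimage {Ω : Type*} [MeasurableSpace Ω] {P : Measure Ω}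
    {μ : Measure ℝ} {X : Ω → ℝ} (hX : Measurable X) (hμ : P.map X = μ) (x : ℝ) :
    tail μ x = P.real (X ⁻¹' Ioi x) := by
  rw [tail, ← hμ, Measure.map_apply hX measurableSet_Ioi, measureReal_def]

theorem MemH.eventually_le_self {μ : Measure ℝ} {h : ℝ → ℝ} (hh : MemH μ h) :
    ∀ᶠ x in atTop, h x ≤ x := by
  filter_upwards [hh.ratio_zero.eventually (eventually_lt_nhds one_pos), eventually_gt_atTop 0]
    with x hx hx₀
  exact ((div_lt_one hx₀).1 hx).le

theorem joint_tail_negligible_general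
    {Ω : Type*} (G : MeasurableSpace Ω) [mΩ : MeasurableSpace Ω] [StandardBorelSpace Ω]
    (P : MeasureTheory.Measure Ω) [MeasureTheory.IsProbabilityMeasure P]
    (hG : G ≤ mΩ)
    (μ : MeasureTheory.Measure ℝ)
    (X : Fin 2 → Ω → ℝ) (hXmeas : ∀ i, Measurable (X i))
    (hD1 : ProbabilityTheory.iCondIndepFun (mΩ := mΩ) G hG X P)
    (hdist : ∀ i, MeasureTheory.Measure.map (X i) P = μ)
    (h : ℝ → ℝ) (hmemH : MemH μ h) (hD3 : AssumptionD3 P G X μ h) :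
    Filter.Tendsto
      (fun x => (P {ω | x < X 0 ω ∧ x < X 1 ω}).toReal / tail μ x)
      Filter.atTop (nhds 0) := by
  obtain ⟨r, B, -, hBmeas, hBmono, -, hBbound, hBsmall, hrtail, -⟩ := hD3
  have : IsFiniteMeasure μ := hdist 0 ▸ Measure.isFiniteMeasure_map P (X 0)
  have hCI : CondIndepFun G hG (X 0) (X 1) P := hD1.condIndepFun (by decide)
  have hjoint : ∀ᶠ x in atTop, (P {ω | x < X 0 ω ∧ x < X 1 ω}).toReal ≤
      max (r x) 0 * tail μ (h x) * tail μ x + P.real (B 0 (h x))ᶜ := by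
    filter_upwards [hmemH.eventually_le_self] with x hhx
    have hmono := tail_antitone μ hhx
    have hBcompl : P.real (B 0 x)ᶜ ≤ P.real (B 0 (h x))ᶜ :=
      measureReal_mono (compl_subset_compl.2 (hBmono 0 hhx))
    -- `r` may be negative; its positive part makes the bound on `B₀(x)` usable.
    have hbound := hCI.measureReal_inter_preimage_le (hXmeas 0) (hXmeas 1)
      (measurableSet_Ioi (a := x)) (measurableSet_Ioi (a := x)) (hBmeas 0 x)
      (mul_nonneg (le_max_right (r x) 0) (tail_nonneg μ x))
      ((hBbound 0 x).mono fun ω hω hB => (hω hB).trans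
        (mul_le_mul_of_nonneg_right (le_max_left _ _) (tail_nonneg μ x)))
    rw [← tail_eq_measureReal_preimage (hXmeas 1) (hdist 1)] at hbound
    exact hbound.trans (by gcongr; exact tail_nonneg μ x)
  have hfirst : (fun x => max (r x) 0 * tail μ (h x) * tail μ x) =o[atTop] tail μ := by
    have hr : Tendsto (fun x => max (r x) 0 * tail μ (h x)) atTop (𝓝 0) := by
      simpa [max_mul_of_nonneg _ _ (tail_nonneg μ _)] using hrtail.max_left
    simpa using (Asymptotics.isLittleO_one_iff ℝ).2 hr |>.mul_isBigO (Asymptotics.isBigO_refl _ _)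
  have hsecond : (fun x => P.real (B 0 (h x))ᶜ) =o[atTop] tail μ :=
    Asymptotics.isLittleO_iff.2 fun ε hε => (hBsmall ε hε).mono fun x hx => by
      rw [Real.norm_of_nonneg measureReal_nonneg, Real.norm_of_nonneg (tail_nonneg μ x)]
      exact hx 0
  refine Asymptotics.IsLittleO.tendsto_div_nhds_zero ?_
  refine (Asymptotics.IsBigO.of_bound' ?_).trans_isLittleO (hfirst.add hsecond)
  filter_upwards [hjoint] with x hx
  exact (Real.norm_of_nonneg ENNReal.toReal_nonneg).trans_le (hx.trans (Real.le_norm_self _))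

/-- For two conditionally independent random variables with common subexponential
distribution satisfying Assumption D3, the joint tail is negligible:
`P(X₁ > x, X₂ > x) = o(F̄(x))`. -/
theorem joint_tail_negligible
    {Ω : Type*} (G : MeasurableSpace Ω) [mΩ : MeasurableSpace Ω] [StandardBorelSpace Ω]
    (P : MeasureTheory.Measure Ω) [MeasureTheory.IsProbabilityMeasure P]
    (hG : G ≤ mΩ)
    (μ : MeasureTheory.Measure ℝ) [MeasureTheory.IsProbabilityMeasure μ]
    (hS : Subexponential μ)
    (X : Fin 2 → Ω → ℝ) (hXmeas : ∀ i, Measurable (X i))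
    (hD1 : ProbabilityTheory.iCondIndepFun (mΩ := mΩ) G hG X P)
    (hdist : ∀ i, MeasureTheory.Measure.map (X i) P = μ)
    (h : ℝ → ℝ) (hmemH : MemH μ h) (hD3 : AssumptionD3 P G X μ h) :
    Filter.Tendsto
      (fun x => (P {ω | x < X 0 ω ∧ x < X 1 ω}).toReal / tail μ x)
      Filter.atTop (nhds 0) :=
  joint_tail_negligible_general G (mΩ := mΩ) P hG μ X hXmeas hD1 hdist h hmemH hD3
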